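/- arXiv:1510.00658 — 2 statements merged into one kernel-verified Lean document; each statement's English description precedes it below -/
import Mathlib

section
/- If A is an invertible X×X real matrix all of whose eigenvalues have strictly negative real part, then for every nonnegative integer m, ∫_0^∞ t^m exp(At) dt = (-1)^{m+1} m! A^{-(m+1)}. -/
open NormedSpace Set Filter MeasureTheory
open scoped Matrix
open scoped Topology

lemma aux_pow_le_exp {δ t : ℝ} (hδ : 0 < δ) (ht : 0 ≤ t) (j : ℕ) :
    t ^ j / j.factorial ≤ δ⁻¹ ^ j * Real.exp (δ * t) := by
  have h1 : (δ * t) ^ j / j.factorial ≤ Real.exp (δ * t) := by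
    calc (δ * t) ^ j / j.factorial
        ≤ ∑ i ∈ Finset.range (j + 1), (δ * t) ^ i / i.factorial := by
          refine Finset.single_le_sum (f := fun i => (δ*t)^i / i.factorial) ?_ (Finset.self_mem_range_succ j)
          intro i _
          positivity
      _ ≤ Real.exp (δ * t) := Real.sum_le_exp_of_nonneg (by positivity) _
  have h2 : (0:ℝ) < δ ^ j := pow_pos hδ j
  rw [mul_pow] at h1
  have := (div_le_iff₀ (by positivity : (0:ℝ) < (j.factorial:ℝ))).mp h1
  rw [div_le_iff₀ (by positivity : (0:ℝ) < (j.factorial:ℝ))]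
  calc t ^ j = (δ ^ j * t ^ j) / δ ^ j := by field_simp
    _ ≤ (Real.exp (δ * t) * j.factorial) / δ ^ j := by gcongr
    _ = δ⁻¹ ^ j * Real.exp (δ * t) * j.factorial := by
        rw [inv_pow]; ring


set_option maxHeartbeats 1000000 in
lemma aux_exp_map (X : ℕ) (M : Matrix (Fin X) (Fin X) ℝ) :
    (exp M).map (Complex.ofReal ·) = exp (M.map (Complex.ofReal ·)) := by
  letI : SeminormedRing (Matrix (Fin X) (Fin X) ℝ) := Matrix.linftyOpSemiNormedRing
  letI : NormedRing (Matrix (Fin X) (Fin X) ℝ) := Matrix.linftyOpNormedRing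
  letI : NormedAlgebra ℝ (Matrix (Fin X) (Fin X) ℝ) := Matrix.linftyOpNormedAlgebra
  letI : SeminormedRing (Matrix (Fin X) (Fin X) ℂ) := Matrix.linftyOpSemiNormedRing
  letI : NormedRing (Matrix (Fin X) (Fin X) ℂ) := Matrix.linftyOpNormedRing
  letI : NormedAlgebra ℝ (Matrix (Fin X) (Fin X) ℂ) := Matrix.linftyOpNormedAlgebra
  let ψ : Matrix (Fin X) (Fin X) ℝ →ₗ[ℝ] Matrix (Fin X) (Fin X) ℂ :=
    Complex.ofRealAm.toLinearMap.mapMatrix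
  let ψL : Matrix (Fin X) (Fin X) ℝ →L[ℝ] Matrix (Fin X) (Fin X) ℂ :=
    LinearMap.toContinuousLinearMap ψ
  have hsum : Summable fun n : ℕ => (n.factorial⁻¹ : ℝ) • M ^ n := expSeries_summable' M
  have h2 : ∀ n : ℕ, ψL ((n.factorial⁻¹ : ℝ) • M ^ n)
      = (n.factorial⁻¹ : ℝ) • (M.map (Complex.ofReal ·)) ^ n := by
    intro n
    rw [_root_.map_smul]
    congr 1
    show (M ^ n).map (Complex.ofReal ·) = (M.map (Complex.ofReal ·)) ^ n
    have := (Complex.ofRealHom.mapMatrix (m := Fin X)).map_pow M n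
    exact this
  calc (exp M).map (Complex.ofReal ·) = ψL (exp M) := rfl
    _ = ψL (∑' n : ℕ, (n.factorial⁻¹ : ℝ) • M ^ n) := by rw [exp_eq_tsum (𝕂 := ℝ)]
    _ = ∑' n : ℕ, ψL ((n.factorial⁻¹ : ℝ) • M ^ n) := ψL.map_tsum hsum
    _ = ∑' n : ℕ, (n.factorial⁻¹ : ℝ) • (M.map (Complex.ofReal ·)) ^ n := tsum_congr h2
    _ = exp (M.map (Complex.ofReal ·)) := by rw [exp_eq_tsum (𝕂 := ℝ)]

set_option maxHeartbeats 1000000 in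
lemma aux_exp_RC (X : ℕ) (M : Matrix (Fin X) (Fin X) ℂ) : exp M = exp M := by
  letI : SeminormedRing (Matrix (Fin X) (Fin X) ℂ) := Matrix.linftyOpSemiNormedRing
  letI : NormedRing (Matrix (Fin X) (Fin X) ℂ) := Matrix.linftyOpNormedRing
  letI : NormedAlgebra ℝ (Matrix (Fin X) (Fin X) ℂ) := Matrix.linftyOpNormedAlgebra
  letI : NormedAlgebra ℂ (Matrix (Fin X) (Fin X) ℂ) := Matrix.linftyOpNormedAlgebra
  rfl

set_option maxHeartbeats 1000000 in
lemma matrix_exp_entry_decay (X : ℕ) (A : Matrix (Fin X) (Fin X) ℝ)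
    (hur : ∀ z ∈ spectrum ℂ (A.map (Complex.ofReal ·)), z.re < 0) :
    ∃ ε > 0, ∃ C : ℝ, ∀ t ∈ Set.Ici (0:ℝ), ∀ i j,
      |(exp (t • A)) i j| ≤ C * Real.exp (-ε * t) := by
  classical
  letI : SeminormedRing (Matrix (Fin X) (Fin X) ℂ) := Matrix.linftyOpSemiNormedRing
  letI : NormedRing (Matrix (Fin X) (Fin X) ℂ) := Matrix.linftyOpNormedRing
  letI : NormedAlgebra ℂ (Matrix (Fin X) (Fin X) ℂ) := Matrix.linftyOpNormedAlgebra
  letI : NormedAlgebra ℝ (Matrix (Fin X) (Fin X) ℂ) := Matrix.linftyOpNormedAlgebra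
  letI : NormedAlgebra ℚ (Matrix (Fin X) (Fin X) ℂ) := Matrix.linftyOpNormedAlgebra
  set B : Matrix (Fin X) (Fin X) ℂ := A.map (Complex.ofReal ·) with hB
  obtain ⟨ε, hε, hspec⟩ : ∃ ε > 0, ∀ z ∈ spectrum ℂ B, z.re < -ε := by
    rcases Set.eq_empty_or_nonempty (spectrum ℂ B) with h | h
    · exact ⟨1, one_pos, by simp [h]⟩
    · have hcpt : IsCompact (spectrum ℂ B) := spectrum.isCompact B
      obtain ⟨z₀, hz₀, hmax⟩ := hcpt.exists_isMaxOn h (Complex.continuous_re.continuousOn)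
      refine ⟨-z₀.re/2, by linarith [hur z₀ hz₀], fun z hz => ?_⟩
      have h1 : z.re ≤ z₀.re := hmax hz
      have h2 : z₀.re < 0 := hur z₀ hz₀
      linarith
  -- the submodule of decaying vectors
  set f : Module.End ℂ (Fin X → ℂ) := Matrix.toLinAlgEquiv' B with hf
  let S : Submodule ℂ (Fin X → ℂ) :=
    { carrier := {v | ∃ C : ℝ, ∀ t ∈ Set.Ici (0:ℝ),
        ‖exp ((t:ℂ) • B) *ᵥ v‖ ≤ C * Real.exp (-ε * t)}
      add_mem' := by
        rintro a b ⟨Ca, hCa⟩ ⟨Cb, hCb⟩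
        refine ⟨Ca + Cb, fun t ht => ?_⟩
        rw [Matrix.mulVec_add]
        calc ‖exp ((t:ℂ) • B) *ᵥ a + exp ((t:ℂ) • B) *ᵥ b‖
            ≤ ‖exp ((t:ℂ) • B) *ᵥ a‖ + ‖exp ((t:ℂ) • B) *ᵥ b‖ := norm_add_le _ _
          _ ≤ Ca * Real.exp (-ε * t) + Cb * Real.exp (-ε * t) :=
              add_le_add (hCa t ht) (hCb t ht)
          _ = (Ca + Cb) * Real.exp (-ε * t) := by ring
      zero_mem' := ⟨0, fun t _ => by simp [Matrix.mulVec_zero]⟩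
      smul_mem' := by
        rintro c a ⟨Ca, hCa⟩
        refine ⟨‖c‖ * Ca, fun t ht => ?_⟩
        rw [Matrix.mulVec_smul, norm_smul, mul_assoc]
        exact mul_le_mul_of_nonneg_left (hCa t ht) (norm_nonneg c) }
  have hS : ∀ v : Fin X → ℂ, v ∈ S := by
    have htop := Module.End.iSup_maxGenEigenspace_eq_top f
    intro v
    have hv : v ∈ (⊤ : Submodule ℂ (Fin X → ℂ)) := Submodule.mem_top
    rw [← htop] at hv
    revert v
    rw [← SetLike.le_def, iSup_le_iff]
    intro μ v hv
    rcases eq_or_ne v 0 with rfl | hv0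
    · exact S.zero_mem
    -- μ is in the spectrum
    obtain ⟨k, hk⟩ := (Module.End.mem_maxGenEigenspace f μ v).mp hv
    have hμ : μ ∈ spectrum ℂ B := by
      have h1 : Module.End.HasGenEigenvalue f μ k := by
        rw [Module.End.hasGenEigenvalue_iff]
        rw [Submodule.ne_bot_iff]
        refine ⟨v, ?_, hv0⟩
        rw [Module.End.mem_genEigenspace_nat]
        exact hk
      have h2 := (Module.End.hasEigenvalue_of_hasGenEigenvalue h1).mem_spectrum
      rwa [hf, AlgEquiv.spectrum_eq Matrix.toLinAlgEquiv' B] at h2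
    set N : Matrix (Fin X) (Fin X) ℂ := B - μ • 1 with hN
    have hNpow : ∀ l : ℕ, N ^ (k + l) *ᵥ v = 0 := by
      intro l
      have h1 : Matrix.toLinAlgEquiv' (N ^ (k + l)) = (f - μ • 1) ^ (k + l) := by
        rw [map_pow, hN, map_sub, _root_.map_smul, map_one]
      have h2 : N ^ (k + l) *ᵥ v = (Matrix.toLinAlgEquiv' (N ^ (k + l))) v := by
        rw [Matrix.toLinAlgEquiv'_apply]
      rw [h2, h1, add_comm, pow_add, Module.End.mul_apply, hk, map_zero]
    -- decay on this generalized eigenspace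
    set δ : ℝ := -μ.re - ε with hδdef
    have hδ : 0 < δ := by
      have := hspec μ hμ; rw [hδdef]; linarith
    let φ : Matrix (Fin X) (Fin X) ℂ →ₗ[ℂ] (Fin X → ℂ) :=
      { toFun := fun M => M *ᵥ v
        map_add' := fun M₁ M₂ => Matrix.add_mulVec M₁ M₂ v
        map_smul' := fun c M => Matrix.smul_mulVec c M v }
    let φL : Matrix (Fin X) (Fin X) ℂ →L[ℂ] (Fin X → ℂ) := LinearMap.toContinuousLinearMap φ
    have hexp : ∀ t : ℝ, exp ((t:ℂ) • B) *ᵥ v =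
        Complex.exp ((t:ℂ) * μ) •
          ∑ j ∈ Finset.range k, (((t:ℂ) ^ j * (j.factorial : ℂ)⁻¹) • (N ^ j *ᵥ v)) := by
      intro t
      have hBsplit : (t:ℂ) • B = ((t:ℂ) * μ) • (1 : Matrix (Fin X) (Fin X) ℂ) + (t:ℂ) • N := by
        rw [hN, smul_sub, mul_smul]
        abel
      have hcomm : Commute (((t:ℂ)*μ) • (1 : Matrix (Fin X) (Fin X) ℂ)) ((t:ℂ) • N) :=
        ((Commute.one_left _).smul_left _).smul_right _
      rw [hBsplit, Matrix.exp_add_of_commute _ _ hcomm]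
      have h1 : exp (((t:ℂ)*μ) • (1 : Matrix (Fin X) (Fin X) ℂ))
          = Complex.exp ((t:ℂ)*μ) • (1 : Matrix (Fin X) (Fin X) ℂ) := by
        have h0 := algebraMap_exp_comm (𝔸 := Matrix (Fin X) (Fin X) ℂ) ((t:ℂ)*μ)
        rw [← Complex.exp_eq_exp_ℂ, Algebra.algebraMap_eq_smul_one, Algebra.algebraMap_eq_smul_one] at h0
        exact h0.symm
      rw [h1, smul_mul_assoc, one_mul, Matrix.smul_mulVec]
      congr 1
      have hsumm := NormedSpace.expSeries_summable' (𝕂 := ℂ) ((t:ℂ) • N)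
      have h2 : exp ((t:ℂ) • N) *ᵥ v = ∑' j : ℕ, φL ((j.factorial:ℂ)⁻¹ • ((t:ℂ) • N) ^ j) := by
        rw [exp_eq_tsum (𝕂 := ℂ)]
        exact (φL.map_tsum hsumm)
      rw [h2]
      have hterm : ∀ j : ℕ, φL ((j.factorial:ℂ)⁻¹ • ((t:ℂ) • N) ^ j)
          = ((t:ℂ) ^ j * (j.factorial : ℂ)⁻¹) • (N ^ j *ᵥ v) := by
        intro j
        show ((j.factorial:ℂ)⁻¹ • ((t:ℂ) • N) ^ j) *ᵥ v = _
        rw [smul_pow, smul_smul, Matrix.smul_mulVec]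
        ring_nf
      simp_rw [hterm]
      refine tsum_eq_sum ?_
      intro j hj
      have hjk : k ≤ j := by
        by_contra h
        exact hj (Finset.mem_range.mpr (lt_of_not_ge h))
      obtain ⟨l, rfl⟩ := Nat.exists_eq_add_of_le hjk
      rw [hNpow l, smul_zero]
    refine ⟨∑ j ∈ Finset.range k, δ⁻¹ ^ j * ‖N ^ j *ᵥ v‖, fun t ht => ?_⟩
    have ht0 : (0:ℝ) ≤ t := ht
    rw [hexp t, norm_smul]
    have habs : ‖Complex.exp ((t:ℂ) * μ)‖ = Real.exp (t * μ.re) := by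
      rw [Complex.norm_exp]
      congr 1
      simp [Complex.mul_re]
    rw [habs]
    have hsum : ‖∑ j ∈ Finset.range k, (((t:ℂ) ^ j * (j.factorial : ℂ)⁻¹) • (N ^ j *ᵥ v))‖
        ≤ ∑ j ∈ Finset.range k, (δ⁻¹ ^ j * ‖N ^ j *ᵥ v‖) * Real.exp (δ * t) := by
      refine (norm_sum_le _ _).trans (Finset.sum_le_sum ?_)
      intro j _
      rw [norm_smul]
      have h3 : ‖(t:ℂ) ^ j * (j.factorial : ℂ)⁻¹‖ = t ^ j / j.factorial := by
        rw [norm_mul, norm_pow, norm_inv, Complex.norm_real, Complex.norm_natCast,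
          Real.norm_eq_abs, abs_of_nonneg ht0, div_eq_mul_inv]
      rw [h3]
      have h4 := aux_pow_le_exp hδ ht0 j
      calc t ^ j / j.factorial * ‖N ^ j *ᵥ v‖
          ≤ (δ⁻¹ ^ j * Real.exp (δ * t)) * ‖N ^ j *ᵥ v‖ := by
            exact mul_le_mul_of_nonneg_right h4 (norm_nonneg _)
        _ = (δ⁻¹ ^ j * ‖N ^ j *ᵥ v‖) * Real.exp (δ * t) := by ring
    calc Real.exp (t * μ.re) * ‖∑ j ∈ Finset.range k, (((t:ℂ) ^ j * (j.factorial : ℂ)⁻¹) • (N ^ j *ᵥ v))‖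
        ≤ Real.exp (t * μ.re) * (∑ j ∈ Finset.range k, (δ⁻¹ ^ j * ‖N ^ j *ᵥ v‖) * Real.exp (δ * t)) :=
          mul_le_mul_of_nonneg_left hsum (Real.exp_nonneg _)
      _ = (∑ j ∈ Finset.range k, δ⁻¹ ^ j * ‖N ^ j *ᵥ v‖) * (Real.exp (t * μ.re) * Real.exp (δ * t)) := by
          rw [← Finset.sum_mul]; ring
      _ = (∑ j ∈ Finset.range k, δ⁻¹ ^ j * ‖N ^ j *ᵥ v‖) * Real.exp (-ε * t) := by
          rw [← Real.exp_add]
          congr 1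
          rw [hδdef]; ring
  -- conclude entrywise bounds
  choose Cf hCf using fun j : Fin X => hS (Pi.single j 1)
  refine ⟨ε, hε, ∑ j : Fin X, max (Cf j) 0, fun t ht i j => ?_⟩
  have ht0 : (0:ℝ) ≤ t := ht
  have hmap : (exp (t • A)).map (Complex.ofReal ·) = exp ((t:ℂ) • B) := by
    have h1 := aux_exp_map X (t • A)
    have h2 : (t • A).map (Complex.ofReal ·) = (t:ℂ) • B := by
      ext i j
      simp only [Matrix.map_apply, Matrix.smul_apply, smul_eq_mul, Complex.ofReal_mul,
        Complex.real_smul, hB]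
    rw [h1, h2, aux_exp_RC]
  have hentry : ((exp (t • A)) i j : ℂ) = (exp ((t:ℂ) • B)) i j := by
    rw [← hmap]; rfl
  have h5 : |(exp (t • A)) i j| = ‖(exp ((t:ℂ) • B)) i j‖ := by
    rw [← hentry, Complex.norm_real, Real.norm_eq_abs]
  rw [h5]
  have h6 : (exp ((t:ℂ) • B)) i j = (exp ((t:ℂ) • B) *ᵥ Pi.single j 1) i := by
    rw [Matrix.mulVec_single]
    simp
  rw [h6]
  calc ‖(exp ((t:ℂ) • B) *ᵥ Pi.single j 1) i‖
      ≤ ‖exp ((t:ℂ) • B) *ᵥ Pi.single j 1‖ := norm_le_pi_norm _ i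
    _ ≤ Cf j * Real.exp (-ε * t) := hCf j t ht
    _ ≤ (∑ j' : Fin X, max (Cf j') 0) * Real.exp (-ε * t) := by
        refine mul_le_mul_of_nonneg_right ?_ (Real.exp_nonneg _)
        calc Cf j ≤ max (Cf j) 0 := le_max_left _ _
          _ ≤ ∑ j' : Fin X, max (Cf j') 0 :=
            Finset.single_le_sum (f := fun j' : Fin X => max (Cf j') 0)
              (fun j' _ => le_max_right _ _) (Finset.mem_univ j)

set_option maxHeartbeats 1000000 in
/-- If A is an invertible real Hurwitz matrix (all eigenvalues have negative real
part), then entrywise ∫_0^∞ t^m exp(At) dt = (-1)^{m+1} m! A^{-(m+1)}. -/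
theorem integral_pow_mul_exp_hurwitz
    (X : ℕ) (A : Matrix (Fin X) (Fin X) ℝ)
    (hinv : IsUnit A.det)
    (hur : ∀ z ∈ spectrum ℂ (A.map (Complex.ofReal ·)), z.re < 0)
    (m : ℕ) :
    ∀ i j : Fin X,
      (∫ t in Set.Ioi (0:ℝ), t ^ m * (NormedSpace.exp (t • A)) i j) =
        ((-1 : ℝ) ^ (m + 1) * (Nat.factorial m)) * ((A⁻¹) ^ (m + 1)) i j := by
  classical
  letI : SeminormedRing (Matrix (Fin X) (Fin X) ℝ) := Matrix.linftyOpSemiNormedRing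
  letI : NormedRing (Matrix (Fin X) (Fin X) ℝ) := Matrix.linftyOpNormedRing
  letI : NormedAlgebra ℝ (Matrix (Fin X) (Fin X) ℝ) := Matrix.linftyOpNormedAlgebra
  letI : NormedAlgebra ℚ (Matrix (Fin X) (Fin X) ℝ) := Matrix.linftyOpNormedAlgebra
  letI : TopologicalSpace (Matrix (Fin X) (Fin X) ℝ) :=
    PseudoMetricSpace.toUniformSpace.toTopologicalSpace
  obtain ⟨ε, hε, C, hC⟩ := matrix_exp_entry_decay X A hur
  -- a norm bound
  have hnorm : ∀ t ∈ Set.Ici (0:ℝ), ‖exp (t • A)‖ ≤ (X : ℝ) * (max C 0) * Real.exp (-ε * t) := by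
    intro t ht
    rcases isEmpty_or_nonempty (Fin X) with hX | hX
    · have : exp (t • A) = 0 := Subsingleton.elim _ _
      rw [this, norm_zero]
      positivity
    · obtain ⟨i, -, hi⟩ := Finset.exists_mem_eq_sup (Finset.univ : Finset (Fin X))
        Finset.univ_nonempty (fun i => ∑ j, ‖exp (t • A) i j‖₊)
      rw [Matrix.linfty_opNorm_def, hi]
      push_cast
      calc ∑ j, ‖exp (t • A) i j‖
          ≤ ∑ _j : Fin X, (max C 0) * Real.exp (-ε * t) := by
            refine Finset.sum_le_sum fun j _ => ?_
            rw [Real.norm_eq_abs]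
            exact (hC t ht i j).trans
              (mul_le_mul_of_nonneg_right (le_max_left _ _) (Real.exp_nonneg _))
        _ = (X : ℝ) * (max C 0) * Real.exp (-ε * t) := by
            rw [Finset.sum_const, Finset.card_univ, Fintype.card_fin, nsmul_eq_mul]
            ring
  set K : ℝ := (X : ℝ) * (max C 0) with hK
  have hK0 : 0 ≤ K := by positivity
  -- continuity
  have hcont : Continuous fun t : ℝ => exp (t • A) :=
    exp_continuous.comp (continuous_id.smul continuous_const)
  -- integrability of t^k • exp (t A)
  have hint : ∀ k : ℕ, IntegrableOn (fun t : ℝ => t ^ k • exp (t • A)) (Set.Ioi 0) := by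
    intro k
    have hg : IntegrableOn (fun t : ℝ => K * (t ^ k * Real.exp (-ε * t))) (Set.Ioi 0) := by
      have hg0 : IntegrableOn (fun x : ℝ => x ^ ((k:ℕ):ℝ) * Real.exp (-ε * x ^ (1:ℝ)))
          (Set.Ioi 0) :=
        integrableOn_rpow_mul_exp_neg_mul_rpow
          (lt_of_lt_of_le neg_one_lt_zero (Nat.cast_nonneg k)) one_pos hε
      refine (hg0.congr_fun ?_ measurableSet_Ioi).const_mul K
      intro t ht
      simp only [Real.rpow_one, Real.rpow_natCast]
    refine Integrable.mono' hg ?_ ?_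
    · exact ((continuous_pow k).smul hcont).aestronglyMeasurable
    · rw [ae_restrict_iff' measurableSet_Ioi]
      refine ae_of_all _ fun t ht => ?_
      have ht0 : (0:ℝ) ≤ t := le_of_lt ht
      rw [norm_smul, Real.norm_eq_abs, abs_of_nonneg (pow_nonneg ht0 k)]
      calc t ^ k * ‖exp (t • A)‖ ≤ t ^ k * (K * Real.exp (-ε * t)) :=
            mul_le_mul_of_nonneg_left (hnorm t ht0) (pow_nonneg ht0 k)
        _ = K * (t ^ k * Real.exp (-ε * t)) := by ring
  -- the matrix-valued integrals
  set J : ℕ → Matrix (Fin X) (Fin X) ℝ :=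
    fun k => ∫ t in Set.Ioi (0:ℝ), t ^ k • exp (t • A) with hJdef
  -- left multiplication as a CLM
  let L : Matrix (Fin X) (Fin X) ℝ →L[ℝ] Matrix (Fin X) (Fin X) ℝ :=
    LinearMap.toContinuousLinearMap (LinearMap.mulLeft ℝ A)
  have hLint : ∀ k : ℕ, IntegrableOn (fun t : ℝ => A * (t ^ k • exp (t • A))) (Set.Ioi 0) :=
    fun k => (L.integrable_comp (hint k))
  -- tendsto at top
  have htend : ∀ k : ℕ, Tendsto (fun t : ℝ => t ^ k • exp (t • A)) atTop (𝓝 0) := by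
    intro k
    have h1 : Tendsto (fun t : ℝ => (ε * t) ^ k * Real.exp (-(ε * t))) atTop (𝓝 0) :=
      (Real.tendsto_pow_mul_exp_neg_atTop_nhds_zero k).comp
        (Tendsto.const_mul_atTop hε tendsto_id)
    have h2 : Tendsto (fun t : ℝ => K * (ε⁻¹ ^ k * ((ε * t) ^ k * Real.exp (-(ε * t)))))
        atTop (𝓝 0) := by
      have := (h1.const_mul (ε⁻¹ ^ k)).const_mul K
      simpa using this
    refine squeeze_zero_norm' ?_ h2
    filter_upwards [eventually_ge_atTop (0:ℝ)] with t ht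
    rw [norm_smul, Real.norm_eq_abs, abs_of_nonneg (pow_nonneg ht k)]
    calc t ^ k * ‖exp (t • A)‖ ≤ t ^ k * (K * Real.exp (-ε * t)) :=
          mul_le_mul_of_nonneg_left (hnorm t ht) (pow_nonneg ht k)
      _ = K * (ε⁻¹ ^ k * ((ε * t) ^ k * Real.exp (-(ε * t)))) := by
          rw [mul_pow, ← mul_assoc]
          have hεne : ε ≠ 0 := ne_of_gt hε
          field_simp
          rw [mul_assoc _ _ (ε ^ k), ← mul_pow, one_div, inv_mul_cancel₀ hεne, one_pow, mul_one]
  -- FTC on Ioi 0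
  have hftc : ∀ k : ℕ,
      (∫ t in Set.Ioi (0:ℝ), (((k:ℝ) * t ^ (k-1)) • exp (t • A) + A * (t ^ k • exp (t • A))))
        = - ((0:ℝ) ^ k • (1 : Matrix (Fin X) (Fin X) ℝ)) := by
    intro k
    have hderiv : ∀ t ∈ Set.Ici (0:ℝ), HasDerivAt (fun s : ℝ => s ^ k • exp (s • A))
        (((k:ℝ) * t ^ (k-1)) • exp (t • A) + A * (t ^ k • exp (t • A))) t := by
      intro t _
      have h1 := (hasDerivAt_pow k t).smul (hasDerivAt_exp_smul_const' (𝕂 := ℝ) A t)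
      refine h1.congr_deriv ?_
      rw [add_comm, Matrix.mul_smul]
    have hint1 : IntegrableOn (fun t : ℝ => ((k:ℝ) * t ^ (k-1)) • exp (t • A)) (Set.Ioi 0) := by
      have h3 := (hint (k-1)).smul (k:ℝ)
      have h4 : ((k:ℝ) • fun t : ℝ => t ^ (k-1) • exp (t • A))
          = fun t : ℝ => ((k:ℝ) * t ^ (k-1)) • exp (t • A) := by
        funext t
        simp [smul_smul]
      rwa [h4] at h3
    have hint' : IntegrableOn (fun t : ℝ =>
        ((k:ℝ) * t ^ (k-1)) • exp (t • A) + A * (t ^ k • exp (t • A))) (Set.Ioi 0) :=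
      by have h := IntegrableOn.add hint1 (hLint k); exact h
    have := integral_Ioi_of_hasDerivAt_of_tendsto' hderiv hint' (htend k)
    rw [this]
    simp
  -- relations
  have hrel : ∀ k : ℕ, ((k:ℝ)) • J (k-1) + A * J k = - ((0:ℝ) ^ k • (1 : Matrix (Fin X) (Fin X) ℝ)) := by
    intro k
    rw [← hftc k]
    have hint1 : IntegrableOn (fun t : ℝ => ((k:ℝ) * t ^ (k-1)) • exp (t • A)) (Set.Ioi 0) := by
      have h3 := (hint (k-1)).smul (k:ℝ)
      have h4 : ((k:ℝ) • fun t : ℝ => t ^ (k-1) • exp (t • A))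
          = fun t : ℝ => ((k:ℝ) * t ^ (k-1)) • exp (t • A) := by
        funext t
        simp [smul_smul]
      rwa [h4] at h3
    rw [MeasureTheory.integral_add hint1 (hLint k)]
    congr 1
    · rw [hJdef]
      have : (fun t : ℝ => ((k:ℝ) * t ^ (k-1)) • exp (t • A))
          = fun t : ℝ => (k:ℝ) • (t ^ (k-1) • exp (t • A)) := by
        funext t
        rw [smul_smul]
      rw [this, MeasureTheory.integral_smul]
    · rw [hJdef]
      exact (L.integral_comp_comm (hint k)).symm
  -- solve recursion
  have hJ : ∀ k : ℕ, J k = ((-1:ℝ) ^ (k+1) * k.factorial) • (A⁻¹) ^ (k+1) := by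
    intro k
    induction k with
    | zero =>
      have h0 := hrel 0
      simp only [Nat.cast_zero, zero_smul, Nat.zero_eq, pow_zero, one_smul, zero_add] at h0
      have : A⁻¹ * (A * J 0) = A⁻¹ * (-1) := by rw [h0]
      rw [← mul_assoc, Matrix.nonsing_inv_mul A hinv, one_mul] at this
      rw [this]
      simp [Matrix.mul_neg]
    | succ n ih =>
      have h0 := hrel (n+1)
      have hz : ((0:ℝ) ^ (n+1) • (1 : Matrix (Fin X) (Fin X) ℝ)) = 0 := by
        rw [zero_pow (Nat.succ_ne_zero n), zero_smul]
      rw [hz, neg_zero, Nat.add_sub_cancel] at h0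
      have h1 : A * J (n+1) = -((((n+1:ℕ)):ℝ) • J n) := eq_neg_of_add_eq_zero_right h0
      calc J (n+1) = A⁻¹ * (A * J (n+1)) := by
            rw [← Matrix.mul_assoc, Matrix.nonsing_inv_mul A hinv, Matrix.one_mul]
        _ = -((((n+1:ℕ)):ℝ) • (A⁻¹ * J n)) := by
            rw [h1, Matrix.mul_neg, Matrix.mul_smul]
        _ = -((((n+1:ℕ)):ℝ) • (((-1:ℝ) ^ (n+1) * n.factorial) • (A⁻¹ * (A⁻¹) ^ (n+1)))) := by
            rw [ih, Matrix.mul_smul]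
        _ = ((-1:ℝ) ^ (n+1+1) * (n+1).factorial) • (A⁻¹) ^ (n+1+1) := by
            rw [← pow_succ', smul_smul, ← neg_smul]
            congr 1
            push_cast [Nat.factorial_succ]
            ring
  intro i j
  -- entry evaluation as a CLM
  let Elin : Matrix (Fin X) (Fin X) ℝ →ₗ[ℝ] ℝ :=
    { toFun := fun M => M i j
      map_add' := fun a b => rfl
      map_smul' := fun c a => rfl }
  let E : Matrix (Fin X) (Fin X) ℝ →L[ℝ] ℝ := LinearMap.toContinuousLinearMap Elin
  have h5 : (∫ t in Set.Ioi (0:ℝ), t ^ m * exp (t • A) i j) = E (J m) := by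
    rw [hJdef]
    have h := E.integral_comp_comm (hint m)
    exact h
  refine h5.trans ?_
  rw [hJ m]
  show (((-1:ℝ) ^ (m+1) * m.factorial) • (A⁻¹) ^ (m+1)) i j = _
  rw [Matrix.smul_apply, smul_eq_mul]
end

section
/- Let A_0 be the X×X lower triangular matrix with entries (A_0)_{ii} = -k(1-μ) and (A_0)_{ij} = kμ(1-μ)^{i-j} for j < i, and 0 otherwise, with k > 0 and μ ∈ (0,1). Then A_0 is invertible and its inverse is the lower triangular matrix with diagonal entries -1/(k(1-μ)) and all entries below the diagonal equal to -μ/((1-μ)k). -/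
/-- Inverse of the no-degradation generator A₀ (lower triangular with diagonal
-k(1-μ) and entries kμ(1-μ)^{i-j} below the diagonal): A₀ is invertible and its
inverse is lower triangular with diagonal entries -1/(k(1-μ)) and all entries
below the diagonal equal to -μ/((1-μ)k). -/
theorem A0_inverse
    (X : ℕ) (k μ : ℝ) (hk : 0 < k) (hμ : μ ∈ Set.Ioo (0:ℝ) 1)
    (A₀ : Matrix (Fin X) (Fin X) ℝ)
    (hdiag : ∀ i : Fin X, A₀ i i = -k * (1 - μ))
    (hsub : ∀ i j : Fin X, (j : ℕ) < (i : ℕ) → A₀ i j = k * μ * (1 - μ) ^ ((i : ℕ) - (j : ℕ)))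
    (hup : ∀ i j : Fin X, (i : ℕ) < (j : ℕ) → A₀ i j = 0) :
    IsUnit A₀.det ∧
      ∀ i j : Fin X,
        A₀⁻¹ i j =
          if i = j then -1 / (k * (1 - μ))
          else if (j : ℕ) < (i : ℕ) then -μ / ((1 - μ) * k)
          else 0 := by
  obtain ⟨hμ0, hμ1⟩ := hμ
  have hq0 : (0:ℝ) < 1 - μ := by linarith
  have hk0 : k ≠ 0 := ne_of_gt hk
  have hqne : (1:ℝ) - μ ≠ 0 := ne_of_gt hq0
  have hμne : μ ≠ 0 := ne_of_gt hμ0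
  have hq1 : (1:ℝ) - μ ≠ 1 := by intro h; apply hμne; linarith
  set B : Matrix (Fin X) (Fin X) ℝ := fun i j =>
    if i = j then -1 / (k * (1 - μ))
    else if (j : ℕ) < (i : ℕ) then -μ / ((1 - μ) * k)
    else 0 with hB
  have hBe : ∀ i j : Fin X, B i j =
      if i = j then -1 / (k * (1 - μ))
      else if (j : ℕ) < (i : ℕ) then -μ / ((1 - μ) * k)
      else 0 := fun i j => rfl
  have hmul : A₀ * B = 1 := by
    ext i j
    rw [Matrix.mul_apply, Matrix.one_apply]
    rcases lt_trichotomy (i : ℕ) (j : ℕ) with hij | hij | hij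
    · rw [if_neg (fun h => by rw [h] at hij; exact lt_irrefl _ hij)]
      apply Finset.sum_eq_zero
      intro l _
      rcases lt_or_ge (l : ℕ) (j : ℕ) with h1 | h1
      · have hb : B l j = 0 := by
          rw [hBe]
          rw [if_neg (fun h => by rw [h] at h1; exact lt_irrefl _ h1),
            if_neg (by omega)]
        rw [hb, mul_zero]
      · have ha : A₀ i l = 0 := hup i l (by omega)
        rw [ha, zero_mul]
    · have hij' : i = j := Fin.ext hij
      subst hij'
      rw [if_pos rfl]
      rw [Finset.sum_eq_single i]
      · rw [hdiag i, hBe, if_pos rfl]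
        field_simp
      · intro l _ hl
        rcases lt_or_ge (l : ℕ) (i : ℕ) with h1 | h1
        · have hb : B l i = 0 := by
            rw [hBe, if_neg (fun h => by rw [h] at h1; exact lt_irrefl _ h1),
              if_neg (by omega)]
          rw [hb, mul_zero]
        · have ha : A₀ i l = 0 := by
            apply hup i l
            rcases lt_or_eq_of_le h1 with h2 | h2
            · exact h2
            · exact absurd (Fin.ext h2.symm) hl
          rw [ha, zero_mul]
      · intro h; exact absurd (Finset.mem_univ i) h
    · -- j < i : the main computation
      rw [if_neg (fun h => by rw [h] at hij; exact lt_irrefl _ hij)]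
      obtain ⟨n, hn⟩ : ∃ n, (i : ℕ) = (j : ℕ) + n + 1 := ⟨(i : ℕ) - (j : ℕ) - 1, by omega⟩
      set F : ℕ → ℝ := fun l => if h : l < X then A₀ i ⟨l, h⟩ * B ⟨l, h⟩ j else 0 with hF
      have h1 : ∑ l : Fin X, A₀ i l * B l j = ∑ l ∈ Finset.range X, F l := by
        rw [← Fin.sum_univ_eq_sum_range]
        apply Finset.sum_congr rfl
        intro l _
        simp only [hF, l.isLt, dif_pos, Fin.eta]
      have h2 : ∑ l ∈ Finset.range X, F l = ∑ l ∈ Finset.Icc (j : ℕ) (i : ℕ), F l := by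
        symm
        apply Finset.sum_subset
        · intro l hl
          simp only [Finset.mem_Icc] at hl
          simp only [Finset.mem_range]
          have := i.isLt
          omega
        · intro l hl hl'
          simp only [Finset.mem_range] at hl
          simp only [Finset.mem_Icc] at hl'
          simp only [hF]
          rw [dif_pos hl]
          rcases lt_or_ge l (j : ℕ) with h3 | h3
          · have hb : B ⟨l, hl⟩ j = 0 := by
              rw [hBe, if_neg (by simp only [Fin.ext_iff]; omega),
                if_neg (show ¬ ((j:ℕ) < l) by omega)]
            rw [hb, mul_zero]
          · have ha : A₀ i ⟨l, hl⟩ = 0 := hup i ⟨l, hl⟩ (show (i:ℕ) < l by omega)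
            rw [ha, zero_mul]
      have h3 : ∑ l ∈ Finset.Icc (j : ℕ) (i : ℕ), F l
          = ∑ m ∈ Finset.range (n + 2), F ((j : ℕ) + m) := by
        rw [← Finset.Ico_add_one_right_eq_Icc, Finset.sum_Ico_eq_sum_range]
        have he : (i : ℕ) + 1 - (j : ℕ) = n + 2 := by omega
        rw [he]
      have hg0 : F ((j : ℕ) + 0) = k * μ * (1 - μ) ^ (n + 1) * (-1 / (k * (1 - μ))) := by
        simp only [hF, Nat.add_zero]
        rw [dif_pos j.isLt]
        have e1 : (⟨(j : ℕ), j.isLt⟩ : Fin X) = j := rfl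
        rw [e1, hsub i j hij, hBe, if_pos rfl]
        have he : (i : ℕ) - (j : ℕ) = n + 1 := by omega
        rw [he]
      have htop : F ((j : ℕ) + (n + 1)) = (-k * (1 - μ)) * (-μ / ((1 - μ) * k)) := by
        have he : (j : ℕ) + (n + 1) = (i : ℕ) := by omega
        rw [he]
        simp only [hF]
        rw [dif_pos i.isLt]
        have e1 : (⟨(i : ℕ), i.isLt⟩ : Fin X) = i := rfl
        rw [e1, hdiag i, hBe,
          if_neg (fun h => by rw [h] at hij; exact lt_irrefl _ hij), if_pos hij]
      have hint : ∀ m ∈ Finset.range n, F ((j : ℕ) + (m + 1))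
          = k * μ * (-μ / ((1 - μ) * k)) * (1 - μ) ^ (n - m) := by
        intro m hm
        simp only [Finset.mem_range] at hm
        simp only [hF]
        have hlX : (j : ℕ) + (m + 1) < X := by have := i.isLt; omega
        rw [dif_pos hlX]
        have ha : A₀ i ⟨(j : ℕ) + (m + 1), hlX⟩
            = k * μ * (1 - μ) ^ ((i : ℕ) - ((j : ℕ) + (m + 1))) :=
          hsub i ⟨(j : ℕ) + (m + 1), hlX⟩ (show (j:ℕ) + (m+1) < (i:ℕ) by omega)
        have hb : B ⟨(j : ℕ) + (m + 1), hlX⟩ j = -μ / ((1 - μ) * k) := by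
          rw [hBe, if_neg (by simp only [Fin.ext_iff]; omega), if_pos (show (j:ℕ) < (j:ℕ) + (m+1) by omega)]
        rw [ha, hb]
        have he : (i : ℕ) - ((j : ℕ) + (m + 1)) = n - m := by omega
        rw [he]
        ring
      rw [h1, h2, h3, Finset.sum_range_succ, Finset.sum_range_succ',
        Finset.sum_congr rfl hint, hg0, htop]
      have hgeo : ∑ m ∈ Finset.range n, k * μ * (-μ / ((1 - μ) * k)) * (1 - μ) ^ (n - m)
          = k * μ * (-μ / ((1 - μ) * k)) * ((1 - μ) * (((1 - μ) ^ n - 1) / ((1 - μ) - 1))) := by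
        rw [← Finset.mul_sum]
        congr 1
        have hr : ∑ m ∈ Finset.range n, (1 - μ) ^ (n - m)
            = ∑ m ∈ Finset.range n, (1 - μ) ^ (m + 1) := by
          rw [← Finset.sum_range_reflect]
          apply Finset.sum_congr rfl
          intro m hm
          simp only [Finset.mem_range] at hm
          congr 1
          omega
        rw [hr]
        have : ∀ m, (1 - μ) ^ (m + 1) = (1 - μ) * (1 - μ) ^ m := fun m => by ring
        simp only [this]
        rw [← Finset.mul_sum, geom_sum_eq hq1]
      rw [hgeo]
      have hm1 : (1 : ℝ) - μ - 1 = -μ := by ring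
      rw [hm1]
      field_simp
      ring
  refine ⟨Matrix.isUnit_det_of_right_inverse hmul, ?_⟩
  intro i j
  rw [Matrix.inv_eq_right_inv hmul, hBe]
end
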